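/- (Noether theorem for Markov chains) Let U be an n×n stochastic matrix and O a diagonal real matrix. Then OU = UO if and only if for all j, ∑_i O_i U_{ij} = O_j and ∑_i O_i² U_{ij} = O_j². -/

import Mathlib

/-!
Entrywise, `OU = UO` says `(O_i - O_j) U_ij = 0`, i.e. column `j` of `U` is supported where
`O = O_j`. Column `j` is a probability vector, and the two moment conditions say that `O` has
mean `O_j` and variance `∑_i U_ij (O_i - O_j)² = 0` under it; a sum of nonnegative terms
vanishes only if each term does, which is exactly the support condition.
-/

open Finset

theorem Matrix.diagonal_mul_eq_mul_diagonal_iff {ι R : Type*} [Fintype ι] [DecidableEq ι]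
    [CommRing R] (o : ι → R) (U : Matrix ι ι R) :
    Matrix.diagonal o * U = U * Matrix.diagonal o ↔ ∀ i j, (o i - o j) * U i j = 0 := by
  simp only [← Matrix.ext_iff, Matrix.diagonal_mul, Matrix.mul_diagonal, sub_mul,
    sub_eq_zero, mul_comm (U _ _)]

section Moments

variable {ι : Type*} [Fintype ι]

theorem sum_mul_eq_and_sum_sq_mul_eq_of_forall {R : Type*} [CommRing R] {w x : ι → R} {c : R}
    (hw : ∑ i, w i = 1) (hx : ∀ i, (x i - c) * w i = 0) :
    ∑ i, x i * w i = c ∧ ∑ i, x i ^ 2 * w i = c ^ 2 := by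
  have hxw : ∀ i, x i * w i = c * w i := fun i => by
    simpa [sub_mul, sub_eq_zero] using hx i
  have hx2w : ∀ i, x i ^ 2 * w i = c ^ 2 * w i := fun i => by
    rw [sq, sq, mul_assoc, hxw, mul_left_comm, hxw, mul_assoc]
  simp only [hxw, hx2w, ← mul_sum, hw, mul_one, and_self]

theorem sum_mul_sub_sq_eq_zero_of_sum_mul_eq {R : Type*} [CommRing R] {w x : ι → R} {c : R}
    (hw : ∑ i, w i = 1) (h1 : ∑ i, x i * w i = c) (h2 : ∑ i, x i ^ 2 * w i = c ^ 2) :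
    ∑ i, (x i - c) ^ 2 * w i = 0 :=
  calc ∑ i, (x i - c) ^ 2 * w i
      = ∑ i, x i ^ 2 * w i - 2 * c * ∑ i, x i * w i + c ^ 2 * ∑ i, w i := by
        simp only [mul_sum, ← sum_sub_distrib, ← sum_add_distrib]
        exact sum_congr rfl fun i _ => by ring
    _ = 0 := by rw [h1, h2, hw]; ring

theorem forall_sub_mul_eq_zero_of_sum_mul_eq {R : Type*} [Field R] [LinearOrder R]
    [IsStrictOrderedRing R] {w x : ι → R} {c : R} (hw0 : ∀ i, 0 ≤ w i) (hw : ∑ i, w i = 1)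
    (h1 : ∑ i, x i * w i = c) (h2 : ∑ i, x i ^ 2 * w i = c ^ 2) (i : ι) :
    (x i - c) * w i = 0 := by
  have hvar := sum_mul_sub_sq_eq_zero_of_sum_mul_eq hw h1 h2
  have hi : (x i - c) ^ 2 * w i = 0 :=
    (sum_eq_zero_iff_of_nonneg fun k _ => mul_nonneg (sq_nonneg _) (hw0 k)).mp hvar i
      (mem_univ i)
  rcases mul_eq_zero.mp hi with hx | hw
  · rw [pow_eq_zero_iff two_ne_zero |>.mp hx, zero_mul]
  · rw [hw, mul_zero]

theorem sum_mul_eq_and_sum_sq_mul_eq_iff {R : Type*} [Field R] [LinearOrder R]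
    [IsStrictOrderedRing R] {w x : ι → R} {c : R} (hw0 : ∀ i, 0 ≤ w i) (hw : ∑ i, w i = 1) :
    (∑ i, x i * w i = c ∧ ∑ i, x i ^ 2 * w i = c ^ 2) ↔ ∀ i, (x i - c) * w i = 0 :=
  ⟨fun ⟨h1, h2⟩ => forall_sub_mul_eq_zero_of_sum_mul_eq hw0 hw h1 h2,
    sum_mul_eq_and_sum_sq_mul_eq_of_forall hw⟩

end Moments

/-- Noether theorem for Markov chains: a diagonal observable `O` commutes with
a stochastic matrix `U` iff the expected values of `O` and `O²` are preserved. -/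
theorem noether_markov_chain {n : ℕ} (U : Matrix (Fin n) (Fin n) ℝ)
    (hU0 : ∀ i j, 0 ≤ U i j) (hU1 : ∀ j, ∑ i, U i j = 1)
    (o : Fin n → ℝ) :
    Matrix.diagonal o * U = U * Matrix.diagonal o ↔
      ∀ j, (∑ i, o i * U i j = o j) ∧ (∑ i, (o i) ^ 2 * U i j = (o j) ^ 2) := by
  rw [Matrix.diagonal_mul_eq_mul_diagonal_iff, forall_comm]
  exact forall_congr' fun j =>
    (sum_mul_eq_and_sum_sq_mul_eq_iff (fun i => hU0 i j) (hU1 j)).symm
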